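/- arXiv:1303.2370 — 2 statements merged into one kernel-verified Lean document; each statement's English description precedes it below -/
import Mathlib

section
/- For every n ∈ ℕ, the modified Schreier family equals the Schreier family: a finite subset of ℕ belongs to S_n^M if and only if it belongs to S_n. Here (S_n^M)_{n≥0} is defined by the same induction as (S_n)_{n≥0} except that in the inductive step the condition 'max F_i < min F_{i+1} for all i' is replaced by 'F_1, …, F_k are pairwise disjoint'. -/
open Finset

noncomputable section


/-- Minimum of a finite set of naturals (`0` for the empty set). -/
def fmin (E : Finset ℕ) : ℕ := sInf (E : Set ℕ)

/-- Maximum of a finite set of naturals (`0` for the empty set). -/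
def fmax (E : Finset ℕ) : ℕ := E.sup id

/-- The Schreier families `S_n`:  `S_0` consists of singletons and the empty set, and
`S_{n+1}` consists of unions `F_1 ∪ ⋯ ∪ F_k` of successive members of `S_n` with
`k ≤ min F_1` (equivalently, `k ≤ min (F_1 ∪ ⋯ ∪ F_k)`). -/
def Schreier : ℕ → Set (Finset ℕ)
  | 0 => {F | F.card ≤ 1}
  | n + 1 => {F | ∃ (k : ℕ) (G : Fin k → Finset ℕ),
      F = Finset.univ.biUnion G ∧
      (∀ i, G i ∈ Schreier n) ∧
      (∀ i, (G i).Nonempty) ∧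
      (∀ i j : Fin k, i < j → ∀ a ∈ G i, ∀ b ∈ G j, a < b) ∧
      (∀ a ∈ F, k ≤ a)}

/-- The modified Schreier families `S_n^M`: defined as `S_n`, except that in the inductive
step the sets `F_1, …, F_k` are only required to be pairwise disjoint. -/
def SchreierM : ℕ → Set (Finset ℕ)
  | 0 => {F | F.card ≤ 1}
  | n + 1 => {F | ∃ (k : ℕ) (G : Fin k → Finset ℕ),
      F = Finset.univ.biUnion G ∧
      (∀ i, G i ∈ SchreierM n) ∧
      (∀ i, (G i).Nonempty) ∧
      (∀ i j : Fin k, i ≠ j → Disjoint (G i) (G j)) ∧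
      (∀ a ∈ F, k ≤ a)}

/-!
Only `S_n^M ⊆ S_n` needs an argument, and it goes by induction on `n` through a stronger
statement: pairwise disjoint nonempty `A_1, …, A_k ∈ S_n` can be rearranged into successive
`B_1 < ⋯ < B_k` in `S_n` with the same union such that, if `m_1 ≤ ⋯ ≤ m_k` are the minima of the
`A_i`, all of `B_j ∪ ⋯ ∪ B_k` lies above `m_j`. For `S_0` one sorts the singletons. For `S_{n+1}`,
with the `A_i` sorted by minimum, split each `A_i` into its `p_i ≤ m_i` successive pieces in `S_n`,
rearrange all pieces at once, and cut the result into consecutive blocks of lengths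
`p_1, …, p_k`. Only pieces of `A_1, …, A_{j-1}` have minimum below `m_j`, so the `j`-th block lies
above `m_j ≥ p_j` and is therefore in `S_{n+1}`.
-/

section ListUnion

variable {α : Type*} [DecidableEq α]

def listUnion (L : List (Finset α)) : Finset α := L.foldr (· ∪ ·) ∅

@[simp] lemma listUnion_nil : listUnion ([] : List (Finset α)) = ∅ := rfl

@[simp] lemma listUnion_cons (A : Finset α) (L : List (Finset α)) :
    listUnion (A :: L) = A ∪ listUnion L := rfl

lemma mem_listUnion {a : α} {L : List (Finset α)} : a ∈ listUnion L ↔ ∃ A ∈ L, a ∈ A := by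
  induction L with
  | nil => simp
  | cons B L ih => simp [ih]

lemma listUnion_append (L₁ L₂ : List (Finset α)) :
    listUnion (L₁ ++ L₂) = listUnion L₁ ∪ listUnion L₂ := by
  induction L₁ with
  | nil => simp
  | cons A L ih => simp [ih, Finset.union_assoc]

lemma subset_listUnion {A : Finset α} {L : List (Finset α)} (hA : A ∈ L) : A ⊆ listUnion L :=
  fun _ ha => mem_listUnion.mpr ⟨A, hA, ha⟩

lemma listUnion_subset_listUnion {L₁ L₂ : List (Finset α)} (h : L₁ ⊆ L₂) :
    listUnion L₁ ⊆ listUnion L₂ := fun _ ha =>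
  let ⟨A, hA, ha⟩ := mem_listUnion.mp ha
  mem_listUnion.mpr ⟨A, h hA, ha⟩

lemma List.Perm.listUnion_eq {L₁ L₂ : List (Finset α)} (h : L₁.Perm L₂) :
    listUnion L₁ = listUnion L₂ :=
  (listUnion_subset_listUnion h.subset).antisymm (listUnion_subset_listUnion h.symm.subset)

lemma listUnion_flatMap (L : List (Finset α)) (D : Finset α → List (Finset α))
    (hD : ∀ A ∈ L, listUnion (D A) = A) : listUnion (L.flatMap D) = listUnion L := by
  induction L with
  | nil => rfl
  | cons A L ih =>
    simp only [List.flatMap_cons, listUnion_append, listUnion_cons]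
    rw [hD A (List.mem_cons_self ..), ih fun B hB => hD B (List.mem_cons_of_mem A hB)]

lemma listUnion_nonempty {L : List (Finset α)} (hL : L ≠ []) (hne : ∀ A ∈ L, A.Nonempty) :
    (listUnion L).Nonempty := by
  obtain ⟨A, hA⟩ := List.exists_mem_of_ne_nil L hL
  exact (hne A hA).mono (subset_listUnion hA)

end ListUnion

lemma fmin_mem {A : Finset ℕ} (hA : A.Nonempty) : fmin A ∈ A :=
  Nat.sInf_mem (s := (A : Set ℕ)) (by simpa using hA)

lemma fmin_le {A : Finset ℕ} {a : ℕ} (ha : a ∈ A) : fmin A ≤ a := Nat.sInf_le (by simpa)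

lemma fmin_le_fmin {A B : Finset ℕ} (hA : A.Nonempty) (hAB : A ⊆ B) : fmin B ≤ fmin A :=
  fmin_le (hAB (fmin_mem hA))

/-- `A < B` in the notation of the Schreier literature. -/
def Precedes (A B : Finset ℕ) : Prop := ∀ a ∈ A, ∀ b ∈ B, a < b

lemma Precedes.disjoint {A B : Finset ℕ} (h : Precedes A B) : Disjoint A B :=
  Finset.disjoint_left.mpr fun _ ha hb => lt_irrefl _ (h _ ha _ hb)

lemma Precedes.mono {A B A' B' : Finset ℕ} (h : Precedes A B) (hA : A' ⊆ A) (hB : B' ⊆ B) :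
    Precedes A' B' := fun a ha b hb => h a (hA ha) b (hB hb)

lemma precedes_listUnion {L₁ L₂ : List (Finset ℕ)} (h : ∀ A ∈ L₁, ∀ B ∈ L₂, Precedes A B) :
    Precedes (listUnion L₁) (listUnion L₂) := fun a ha b hb => by
  obtain ⟨A, hA, ha⟩ := mem_listUnion.mp ha
  obtain ⟨B, hB, hb⟩ := mem_listUnion.mp hb
  exact h A hA B hB a ha b hb

lemma exists_fin_iff_exists_list {P : Finset ℕ → Prop} {R : Finset ℕ → Finset ℕ → Prop}
    {F : Finset ℕ} :
    (∃ (k : ℕ) (G : Fin k → Finset ℕ), F = univ.biUnion G ∧ (∀ i, P (G i)) ∧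
      (∀ i, (G i).Nonempty) ∧ (∀ i j : Fin k, i < j → R (G i) (G j)) ∧ ∀ a ∈ F, k ≤ a) ↔
    ∃ L : List (Finset ℕ), (∀ A ∈ L, P A ∧ A.Nonempty) ∧ L.Pairwise R ∧ listUnion L = F ∧
      ∀ a ∈ F, L.length ≤ a := by
  constructor
  · rintro ⟨k, G, rfl, hP, hne, hR, hk⟩
    refine ⟨List.ofFn G, ?_, List.pairwise_ofFn.mpr hR, ?_, by simpa using hk⟩
    · simp only [List.mem_ofFn, forall_exists_index, forall_apply_eq_imp_iff]
      exact fun i => ⟨hP i, hne i⟩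
    · ext a
      simp [mem_listUnion]
  · rintro ⟨L, hL, hR, rfl, hk⟩
    refine ⟨L.length, fun i => L[i], ?_, fun i => (hL _ (L.getElem_mem i.2)).1,
      fun i => (hL _ (L.getElem_mem i.2)).2,
      fun i j hij => List.pairwise_iff_getElem.mp hR _ _ _ _ hij, hk⟩
    ext a
    simp only [mem_listUnion, List.mem_iff_getElem, mem_biUnion, mem_univ, true_and]
    constructor
    · rintro ⟨_, ⟨i, hi, rfl⟩, ha⟩
      exact ⟨⟨i, hi⟩, ha⟩
    · rintro ⟨i, ha⟩
      exact ⟨_, ⟨i, i.2, rfl⟩, ha⟩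

lemma mem_schreier_succ_iff {n : ℕ} {F : Finset ℕ} :
    F ∈ Schreier (n + 1) ↔ ∃ L : List (Finset ℕ), (∀ A ∈ L, A ∈ Schreier n ∧ A.Nonempty) ∧
      L.Pairwise Precedes ∧ listUnion L = F ∧ ∀ a ∈ F, L.length ≤ a := by
  rw [Schreier]
  exact exists_fin_iff_exists_list (R := Precedes)

lemma precedes_of_card_le_one {A B : Finset ℕ} (hA : A.card ≤ 1) (hB : B.card ≤ 1)
    (hAB : Disjoint A B) (hmin : fmin A ≤ fmin B) : Precedes A B := by
  intro a ha b hb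
  have hfa : fmin A = a := Finset.card_le_one.mp hA _ (fmin_mem ⟨a, ha⟩) _ ha
  have hfb : fmin B = b := Finset.card_le_one.mp hB _ (fmin_mem ⟨b, hb⟩) _ hb
  have hab : a ≠ b := fun h => Finset.disjoint_left.mp hAB ha (h ▸ hb)
  omega

/-- If the minima of the members of `L` are `m₁ ≤ ⋯ ≤ mₖ`, then every element of
`M_{j+1} ∪ ⋯ ∪ M_k` is at least `m_{j+1}`. -/
def Dominates (L M : List (Finset ℕ)) : Prop :=
  ∀ v j : ℕ, L.countP (fun A => fmin A < v) ≤ j → ∀ b ∈ listUnion (M.drop j), v ≤ b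

lemma Dominates.le_of_forall_le {L M : List (Finset ℕ)} {v : ℕ} (h : Dominates L M)
    (hv : ∀ A ∈ L, v ≤ fmin A) : ∀ b ∈ listUnion M, v ≤ b :=
  h v 0 (by simpa [List.countP_eq_zero] using hv)

lemma Dominates.drop_length {L₁ L₂ M : List (Finset ℕ)} (h : Dominates (L₁ ++ L₂) M) :
    Dominates L₂ (M.drop L₁.length) := by
  intro v j hj
  rw [List.drop_drop]
  refine h v _ ?_
  rw [List.countP_append]
  have := L₁.countP_le_length (p := fun A => fmin A < v)
  omega

lemma dominates_cons {A X : Finset ℕ} {L M : List (Finset ℕ)}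
    (hA : ∀ b ∈ listUnion (X :: M), fmin A ≤ b) (h : Dominates L M) :
    Dominates (A :: L) (X :: M) := by
  intro v j hj b hb
  by_cases hv : fmin A < v
  · rw [List.countP_cons_of_pos (by simpa using hv)] at hj
    obtain ⟨k, rfl⟩ : ∃ k, j = k + 1 := ⟨j - 1, by omega⟩
    exact h v k (by omega) b hb
  · exact (not_lt.mp hv).trans (hA b (listUnion_subset_listUnion (List.drop_subset _ _) hb))

lemma dominates_self_of_pairwise {L : List (Finset ℕ)}
    (hL : L.Pairwise (fun A B => fmin A ≤ fmin B)) : Dominates L L := by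
  induction L with
  | nil => simp [Dominates]
  | cons A L ih =>
    obtain ⟨hA, hL⟩ := List.pairwise_cons.mp hL
    refine dominates_cons (fun b hb => ?_) (ih hL)
    obtain ⟨B, hB, hbB⟩ := mem_listUnion.mp hb
    rcases List.mem_cons.mp hB with rfl | hB
    · exact fmin_le hbB
    · exact (hA B hB).trans (fmin_le hbB)

structure IsSuccessiveDominating (𝓕 : Set (Finset ℕ)) (L M : List (Finset ℕ)) : Prop where
  length_eq : M.length = L.length
  mem : ∀ B ∈ M, B ∈ 𝓕 ∧ B.Nonempty
  pairwise : M.Pairwise Precedes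
  dominates : Dominates L M

lemma IsSuccessiveDominating.drop {𝓕 : Set (Finset ℕ)} {L₁ L₂ M : List (Finset ℕ)}
    (h : IsSuccessiveDominating 𝓕 (L₁ ++ L₂) M) :
    IsSuccessiveDominating 𝓕 L₂ (M.drop L₁.length) where
  length_eq := by simp [h.length_eq]
  mem B hB := h.mem B (List.mem_of_mem_drop hB)
  pairwise := h.pairwise.sublist (List.drop_sublist _ _)
  dominates := h.dominates.drop_length

def Rearrangeable (𝓕 : Set (Finset ℕ)) : Prop :=
  ∀ L : List (Finset ℕ), (∀ A ∈ L, A ∈ 𝓕 ∧ A.Nonempty) → L.Pairwise Disjoint →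
    ∃ M, IsSuccessiveDominating 𝓕 L M ∧ listUnion M = listUnion L

lemma rearrangeable_of_sorted {𝓕 : Set (Finset ℕ)}
    (h : ∀ L : List (Finset ℕ), L.Pairwise (fun A B => fmin A ≤ fmin B) →
      (∀ A ∈ L, A ∈ 𝓕 ∧ A.Nonempty) → L.Pairwise Disjoint →
      ∃ M, IsSuccessiveDominating 𝓕 L M ∧ listUnion M = listUnion L) :
    Rearrangeable 𝓕 := by
  intro L hL hdisj
  set Ls := L.mergeSort (fun A B => fmin A ≤ fmin B)
  have hperm : Ls.Perm L := List.mergeSort_perm _ _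
  have hsort : Ls.Pairwise (fun A B => fmin A ≤ fmin B) := by
    simpa using List.pairwise_mergeSort (le := fun A B => fmin A ≤ fmin B)
      (fun _ _ _ => by simpa using le_trans) (by simp [le_total]) L
  obtain ⟨M, hM, hMU⟩ := h Ls hsort (fun A hA => hL A (hperm.subset hA))
    ((hperm.pairwise_iff fun h => h.symm).mpr hdisj)
  refine ⟨M, ⟨hM.length_eq.trans hperm.length_eq, hM.mem, hM.pairwise, ?_⟩,
    hMU.trans hperm.listUnion_eq⟩
  exact fun v j hj => hM.dominates v j (by rwa [hperm.countP_eq])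

lemma rearrangeable_schreier_zero : Rearrangeable (Schreier 0) := by
  refine rearrangeable_of_sorted fun L hsort hL hdisj => ⟨L, ⟨rfl, hL, ?_, ?_⟩, rfl⟩
  · refine (hdisj.and hsort).imp_of_mem fun hA hB h => ?_
    exact precedes_of_card_le_one (hL _ hA).1 (hL _ hB).1 h.1 h.2
  · exact dominates_self_of_pairwise hsort

/-- `M'` rearranges all the pieces `D A` (`A ∈ L`); `M` cuts it into consecutive blocks of
lengths `|D A|`. -/
lemma exists_isSuccessiveDominating_schreier_succ {n : ℕ} {D : Finset ℕ → List (Finset ℕ)} :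
    ∀ {L M' : List (Finset ℕ)}, L.Pairwise (fun A B => fmin A ≤ fmin B) →
      (∀ A ∈ L, D A ≠ [] ∧ (D A).length ≤ fmin A ∧ ∀ C ∈ D A, fmin A ≤ fmin C) →
      IsSuccessiveDominating (Schreier n) (L.flatMap D) M' →
      ∃ M, IsSuccessiveDominating (Schreier (n + 1)) L M ∧ listUnion M = listUnion M'
  | [], M', _, _, h => by
    obtain rfl : M' = [] := List.length_eq_zero_iff.mp (by simpa using h.length_eq)
    exact ⟨[], ⟨rfl, by simp, .nil, fun _ _ _ => by simp⟩, rfl⟩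
  | A :: L, M', hsort, hD, h => by
    obtain ⟨hAle, hsort⟩ := List.pairwise_cons.mp hsort
    obtain ⟨hDA, hpA, hminA⟩ := hD A List.mem_cons_self
    rw [List.flatMap_cons] at h
    set p := (D A).length
    have hlow : ∀ b ∈ listUnion M', fmin A ≤ b := by
      refine h.dominates.le_of_forall_le ?_
      simp only [List.mem_append, List.mem_flatMap]
      rintro C (hC | ⟨B, hB, hC⟩)
      · exact hminA C hC
      · exact (hAle B hB).trans ((hD B (List.mem_cons_of_mem A hB)).2.2 C hC)
    obtain ⟨M, hM, hMU⟩ :=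
      exists_isSuccessiveDominating_schreier_succ hsort (fun B hB => hD B (.tail A hB)) h.drop
    have hU : listUnion (listUnion (M'.take p) :: M) = listUnion M' := by
      rw [listUnion_cons, hMU, ← listUnion_append, List.take_append_drop]
    have hp : (M'.take p).length = p := by
      rw [List.length_take, h.length_eq, List.length_append]
      omega
    have hhead : ∀ X ∈ M'.take p, X ∈ Schreier n ∧ X.Nonempty :=
      fun X hX => h.mem X (List.mem_of_mem_take hX)
    refine ⟨listUnion (M'.take p) :: M,
      ⟨by simp [hM.length_eq], List.forall_mem_cons.mpr ⟨⟨?_, ?_⟩, hM.mem⟩,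
        List.pairwise_cons.mpr ⟨fun B hB => ?_, hM.pairwise⟩,
        dominates_cons (hU ▸ hlow) hM.dominates⟩,
      hU⟩
    · refine mem_schreier_succ_iff.mpr
        ⟨M'.take p, hhead, h.pairwise.sublist (List.take_sublist _ _), rfl, fun a ha => ?_⟩
      rw [hp]
      exact hpA.trans (hlow a (listUnion_subset_listUnion (List.take_subset _ _) ha))
    · refine listUnion_nonempty (fun h0 => ?_) fun X hX => (hhead X hX).2
      simp only [h0, List.length_nil] at hp
      exact hDA (List.length_eq_zero_iff.mp hp.symm)
    · have hsplit := List.pairwise_append.mp ((List.take_append_drop p M').symm ▸ h.pairwise)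
      exact (precedes_listUnion hsplit.2.2).mono subset_rfl (hMU ▸ subset_listUnion hB)

lemma rearrangeable_schreier_succ {n : ℕ} (h : Rearrangeable (Schreier n)) :
    Rearrangeable (Schreier (n + 1)) := by
  refine rearrangeable_of_sorted fun L hsort hL hdisj => ?_
  choose! D hDmem hDsucc hDU hDlen using fun A hA => mem_schreier_succ_iff.mp (hL A hA).1
  have hsub : ∀ A ∈ L, ∀ C ∈ D A, C ⊆ A := fun A hA C hC => hDU A hA ▸ subset_listUnion hC
  have hPdisj : (L.flatMap D).Pairwise Disjoint := by
    refine List.pairwise_flatMap.mpr ⟨fun A hA => (hDsucc A hA).imp Precedes.disjoint, ?_⟩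
    exact hdisj.imp_of_mem fun hA hB hAB C hC C' hC' => hAB.mono (hsub _ hA C hC) (hsub _ hB C' hC')
  have hDne : ∀ A ∈ L, D A ≠ [] := fun A hA h0 => by
    have hA' := (hL A hA).2
    rw [← hDU A hA, h0] at hA'
    exact Finset.not_nonempty_empty hA'
  have hPmem : ∀ C ∈ L.flatMap D, C ∈ Schreier n ∧ C.Nonempty := fun C hC => by
    obtain ⟨A, hA, hC⟩ := List.mem_flatMap.mp hC
    exact hDmem A hA C hC
  obtain ⟨M', hM', hM'U⟩ := h (L.flatMap D) hPmem hPdisj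
  obtain ⟨M, hM, hMU⟩ := exists_isSuccessiveDominating_schreier_succ hsort
    (fun A hA => ⟨hDne A hA, hDlen A hA _ (fmin_mem (hL A hA).2),
      fun C hC => fmin_le_fmin (hDmem A hA C hC).2 (hsub A hA C hC)⟩) hM'
  exact ⟨M, hM, by rw [hMU, hM'U, listUnion_flatMap L D hDU]⟩

lemma rearrangeable_schreier : ∀ n, Rearrangeable (Schreier n)
  | 0 => rearrangeable_schreier_zero
  | n + 1 => rearrangeable_schreier_succ (rearrangeable_schreier n)

lemma schreier_subset_schreierM : ∀ n, Schreier n ⊆ SchreierM n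
  | 0 => fun _ h => h
  | n + 1 => by
    rintro F ⟨k, G, hF, hG, hne, hsucc, hk⟩
    refine ⟨k, G, hF, fun i => schreier_subset_schreierM n (hG i), hne, fun i j hij => ?_, hk⟩
    rcases hij.lt_or_gt with h | h
    · exact Precedes.disjoint (hsucc i j h)
    · exact (Precedes.disjoint (hsucc j i h)).symm

lemma schreierM_subset_schreier : ∀ n, SchreierM n ⊆ Schreier n
  | 0 => fun _ h => h
  | n + 1 => by
    rintro F ⟨k, G, hF, hG, hne, hdisj, hk⟩
    obtain ⟨L, hL, hLdisj, rfl, hlen⟩ := (exists_fin_iff_exists_list (R := Disjoint)).mp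
      ⟨k, G, hF, fun i => schreierM_subset_schreier n (hG i), hne,
        fun i j hij => hdisj i j hij.ne, hk⟩
    obtain ⟨M, hM, hMU⟩ := rearrangeable_schreier n L hL hLdisj
    exact mem_schreier_succ_iff.mpr ⟨M, hM.mem, hM.pairwise, hMU, hM.length_eq ▸ hMU ▸ hlen⟩

/-- Lemma 1.2 of [ADKM]: for any `n`, the modified Schreier family coincides with the
Schreier family: `S_n^M = S_n`. -/
theorem schreierM_eq_schreier (n : ℕ) (F : Finset ℕ) :
    F ∈ SchreierM n ↔ F ∈ Schreier n :=
  ⟨fun h => schreierM_subset_schreier n h, fun h => schreier_subset_schreierM n h⟩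

end
end

section
/- Let n, m ∈ ℕ and let G_1, …, G_k be pairwise disjoint nonempty finite subsets of ℕ such that G_i ∈ S_n for every i and {min G_1, …, min G_k} ∈ S_m. Then G_1 ∪ … ∪ G_k ∈ S_{n+m}. -/
/-!
For `n = 1`: cut the union, in increasing order, into consecutive chunks `E_i` with
`#E_i = #G_i`, taking the `G_i` in the order of their minima. Only members with smaller minimum
contribute elements below `min G_i`, so `min E_i ≥ min G_i ≥ #G_i = #E_i`, i.e. `E_i ∈ S_1`;
the minima of the chunks are a spread of `{min G_i} ∈ S_m`, and a successive union of this kind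
lies in `S_{1+m}` (`S_m[S_n] ⊆ S_{n+m}`, by induction on `m`).

For `n + 1`: split each `G_i` into its blocks in `S_n`. The minima of the blocks of `G_i` form a
set in `S_1` with minimum `min G_i`, so by the case `n = 1` all block minima together form a set
in `S_{1+m}`, and induction on `n` applies to the family of all blocks.
-/

open Finset

noncomputable section


lemma fmin_mem_s1 {F : Finset ℕ} (h : F.Nonempty) : fmin F ∈ F :=
  Nat.sInf_mem (s := (F : Set ℕ)) (by exact_mod_cast h)

lemma fmin_le_s1 {F : Finset ℕ} {x : ℕ} (hx : x ∈ F) : fmin F ≤ x :=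
  Nat.sInf_le (by exact_mod_cast hx)

lemma fmin_injective {ι : Type*} {G : ι → Finset ℕ} (hne : ∀ i, (G i).Nonempty)
    (hdisj : Pairwise fun i j => Disjoint (G i) (G j)) :
    Function.Injective fun i => fmin (G i) := by
  intro i j (hij : fmin (G i) = fmin (G j))
  by_contra h
  exact disjoint_left.1 (hdisj h) (fmin_mem_s1 (hne i)) (hij ▸ fmin_mem_s1 (hne j))

lemma strictMonoOn_fmin {I : Finset ℕ} {E : ℕ → Finset ℕ} (hne : ∀ i ∈ I, (E i).Nonempty)
    (hsucc : ∀ i ∈ I, ∀ j ∈ I, i < j → ∀ a ∈ E i, ∀ b ∈ E j, a < b) :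
    StrictMonoOn (fun i => fmin (E i)) I := fun i hi j hj hij =>
  hsucc i hi j hj hij _ (fmin_mem_s1 (hne i hi)) _ (fmin_mem_s1 (hne j hj))

lemma empty_mem_schreier : ∀ n, (∅ : Finset ℕ) ∈ Schreier n
  | 0 => by simp [Schreier]
  | _ + 1 => ⟨0, Fin.elim0, by simp, Fin.rec0, Fin.rec0, Fin.rec0, by simp⟩

theorem mem_schreier_one {F : Finset ℕ} : F ∈ Schreier 1 ↔ ∀ a ∈ F, #F ≤ a := by
  constructor
  · rintro ⟨k, G, rfl, hG, -, -, hk⟩ a ha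
    calc #(univ.biUnion G) ≤ ∑ i, #(G i) := card_biUnion_le
      _ ≤ ∑ _i : Fin k, 1 := sum_le_sum fun i _ => hG i
      _ = k := by simp
      _ ≤ a := hk a ha
  · intro h
    refine ⟨#F, fun t => {F.orderEmbOfFin rfl t}, ?_, fun t => (card_singleton _).le,
      fun t => singleton_nonempty _, ?_, h⟩
    · rw [biUnion_singleton, image_orderEmbOfFin_univ]
    · intro i j hij a ha b hb
      rw [mem_singleton] at ha hb
      subst ha hb
      exact (F.orderEmbOfFin rfl).strictMono hij

theorem image_mem_schreier {m : ℕ} {F : Finset ℕ} {θ : ℕ → ℕ} (hF : F ∈ Schreier m)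
    (hθ : ∀ x ∈ F, x ≤ θ x) (hmono : StrictMonoOn θ F) : F.image θ ∈ Schreier m := by
  induction m generalizing F with
  | zero => exact card_image_le.trans hF
  | succ m ih =>
    obtain ⟨k, N, rfl, hN, hNne, hsucc, hk⟩ := hF
    have hsub : ∀ j, N j ⊆ univ.biUnion N := fun j => subset_biUnion_of_mem N (mem_univ j)
    refine ⟨k, fun j => (N j).image θ, biUnion_image,
      fun j => ih (hN j) (fun x hx => hθ x (hsub j hx)) (hmono.mono (coe_subset.2 (hsub j))),
      fun j => (hNne j).image θ, ?_, ?_⟩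
    · rintro i j hij _ ha' _ hb'
      obtain ⟨a, ha, rfl⟩ := mem_image.1 ha'
      obtain ⟨b, hb, rfl⟩ := mem_image.1 hb'
      exact hmono (hsub i ha) (hsub j hb) (hsucc i j hij a ha b hb)
    · rintro _ hx'
      obtain ⟨x, hx, rfl⟩ := mem_image.1 hx'
      exact (hk x hx).trans (hθ x hx)

section fibres

variable {α β κ : Type*} [DecidableEq β] {I : Finset α} {f : α → β}
  {s : Finset κ} {N : κ → Finset β}

lemma image_filter_mem_of_image_eq_biUnion (hN : I.image f = s.biUnion N) {j : κ} (hj : j ∈ s) :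
    (I.filter fun i => f i ∈ N j).image f = N j := by
  rw [← filter_image (p := (· ∈ N j)), filter_mem_eq_inter, hN, inter_eq_right]
  exact subset_biUnion_of_mem N hj

lemma biUnion_filter_mem_of_image_eq_biUnion [DecidableEq α] (hN : I.image f = s.biUnion N) :
    s.biUnion (fun j => I.filter fun i => f i ∈ N j) = I := by
  refine subset_antisymm (biUnion_subset.2 fun j _ => filter_subset _ I) fun i hi => ?_
  obtain ⟨j, hj, hij⟩ := mem_biUnion.1 (hN ▸ mem_image_of_mem f hi)
  exact mem_biUnion.2 ⟨j, hj, mem_filter.2 ⟨hi, hij⟩⟩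

end fibres

theorem biUnion_mem_schreier_of_successive {n m : ℕ} {I : Finset ℕ} {E : ℕ → Finset ℕ}
    (hne : ∀ i ∈ I, (E i).Nonempty) (hE : ∀ i ∈ I, E i ∈ Schreier n)
    (hsucc : ∀ i ∈ I, ∀ j ∈ I, i < j → ∀ a ∈ E i, ∀ b ∈ E j, a < b)
    (hmin : I.image (fun i => fmin (E i)) ∈ Schreier m) :
    I.biUnion E ∈ Schreier (n + m) := by
  have hmono := strictMonoOn_fmin hne hsucc
  induction m generalizing I with
  | zero =>
    have hI : #I ≤ 1 := by rwa [← card_image_of_injOn hmono.injOn]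
    obtain ⟨i, hi⟩ := card_le_one_iff_subset_singleton.1 hI
    rcases subset_singleton_iff.1 hi with rfl | rfl
    · simpa using empty_mem_schreier n
    · simpa using hE i (mem_singleton_self i)
  | succ m ih =>
    obtain ⟨p, N, hN, hNS, hNne, hNsucc, hp⟩ := hmin
    let block : Fin p → Finset ℕ := fun j => I.filter fun i => fmin (E i) ∈ N j
    have hblock : ∀ j, block j ⊆ I := fun j => filter_subset _ _
    have himage : ∀ j, (block j).image (fun i => fmin (E i)) = N j := fun j =>
      image_filter_mem_of_image_eq_biUnion hN (mem_univ j)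
    show I.biUnion E ∈ Schreier (n + m + 1)
    refine ⟨p, fun j => (block j).biUnion E, ?_, fun j => ?_, fun j => ?_, ?_, ?_⟩
    · rw [← biUnion_biUnion, biUnion_filter_mem_of_image_eq_biUnion hN]
    · refine ih (fun i hi => hne i (hblock j hi)) (fun i hi => hE i (hblock j hi))
        (fun i hi i' hi' => hsucc i (hblock j hi) i' (hblock j hi')) ?_
        (hmono.mono (coe_subset.2 (hblock j)))
      rw [himage]
      exact hNS j
    · obtain ⟨i, hi⟩ := (image_nonempty.1 ((himage j).symm ▸ hNne j))
      exact biUnion_nonempty.2 ⟨i, hi, hne i (hblock j hi)⟩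
    · intro j j' hjj' a ha b hb
      obtain ⟨i, hi, ha⟩ := mem_biUnion.1 ha
      obtain ⟨i', hi', hb⟩ := mem_biUnion.1 hb
      have hlt := hNsucc j j' hjj' _ (mem_filter.1 hi).2 _ (mem_filter.1 hi').2
      exact hsucc i (hblock j hi) i' (hblock j' hi')
        ((hmono.lt_iff_lt (hblock j hi) (hblock j' hi')).1 hlt) a ha b hb
    · intro a ha
      obtain ⟨i, hi, ha⟩ := mem_biUnion.1 ha
      exact (hp _ (mem_image_of_mem _ hi)).trans (fmin_le_s1 ha)

/-- On `U`, the position of `x` in increasing order, counting from `0`. -/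
def rankIn (U : Finset ℕ) (x : ℕ) : ℕ := #(U.filter (· < x))

lemma rankIn_mono (U : Finset ℕ) : Monotone (rankIn U) := fun _ _ hxy =>
  card_le_card (monotone_filter_right U fun _ _ h => h.trans_le hxy)

lemma rankIn_lt_rankIn {U : Finset ℕ} {x y : ℕ} (hx : x ∈ U) (hxy : x < y) :
    rankIn U x < rankIn U y :=
  card_lt_card ((ssubset_iff_of_subset (monotone_filter_right U fun _ _ h => h.trans hxy)).2
    ⟨x, mem_filter.2 ⟨hx, hxy⟩, by simp⟩)

lemma lt_of_rankIn_lt {U : Finset ℕ} {x y : ℕ} (h : rankIn U x < rankIn U y) : x < y :=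
  lt_of_not_ge fun hyx => (rankIn_mono U hyx).not_gt h

lemma rankIn_lt_card {U : Finset ℕ} {x : ℕ} (hx : x ∈ U) : rankIn U x < #U :=
  card_lt_card ((ssubset_iff_of_subset (filter_subset _ U)).2 ⟨x, hx, by simp⟩)

/-- Cutting `U`, in increasing order, into consecutive chunks of sizes `c 0, c 1, …`. -/
def chunk (U : Finset ℕ) (c : ℕ → ℕ) (y : ℕ) : Finset ℕ :=
  U.filter fun x => ∑ j ∈ range y, c j ≤ rankIn U x ∧ rankIn U x < ∑ j ∈ range (y + 1), c j

section chunk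

variable {U : Finset ℕ} {c : ℕ → ℕ}

lemma card_chunk_le (y : ℕ) : #(chunk U c y) ≤ c y := by
  have hinj : Set.InjOn (rankIn U) (chunk U c y) :=
    (StrictMonoOn.injOn (s := U) fun _ hx _ _ h => rankIn_lt_rankIn hx h).mono
      (coe_subset.2 (filter_subset _ U))
  calc #(chunk U c y) ≤ #(Ico (∑ j ∈ range y, c j) (∑ j ∈ range (y + 1), c j)) :=
        card_le_card_of_injOn _ (fun x hx => mem_Ico.2 (mem_filter.1 hx).2) hinj
    _ = c y := by simp [sum_range_succ]

lemma lt_of_mem_chunk {y z a b : ℕ} (hyz : y < z) (ha : a ∈ chunk U c y)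
    (hb : b ∈ chunk U c z) : a < b :=
  lt_of_rankIn_lt <| calc
    rankIn U a < ∑ j ∈ range (y + 1), c j := (mem_filter.1 ha).2.2
    _ ≤ ∑ j ∈ range z, c j := sum_le_sum_of_subset (range_subset_range.2 hyz)
    _ ≤ rankIn U b := (mem_filter.1 hb).2.1

lemma le_of_mem_chunk {y x : ℕ} (hy : rankIn U y ≤ ∑ j ∈ range y, c j)
    (hx : x ∈ chunk U c y) : y ≤ x := by
  obtain ⟨hxU, hsx, -⟩ := mem_filter.1 hx
  by_contra! hxy
  exact (rankIn_lt_rankIn hxU hxy).not_ge (hy.trans hsx)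

lemma exists_mem_chunk {N x : ℕ} (hU : #U ≤ ∑ j ∈ range N, c j) (hx : x ∈ U) :
    ∃ y < N, x ∈ chunk U c y := by
  have hxN : rankIn U x < ∑ j ∈ range N, c j := (rankIn_lt_card hx).trans_le hU
  obtain ⟨y, hy, hy1⟩ := Nat.exists_not_and_succ_of_not_zero_of_exists
    (p := fun y => rankIn U x < ∑ j ∈ range y, c j) (by simp) ⟨N, hxN⟩
  refine ⟨y, ?_, mem_filter.2 ⟨hx, not_lt.1 hy, hy1⟩⟩
  by_contra! hNy
  exact hy (hxN.trans_le (sum_le_sum_of_subset (range_subset_range.2 hNy)))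

lemma card_chunk {N y : ℕ} (hU : #U = ∑ j ∈ range N, c j) (hy : y < N) :
    #(chunk U c y) = c y := by
  have hcover : U ⊆ (range N).biUnion (chunk U c) := fun x hx => by
    obtain ⟨y, hy, hx⟩ := exists_mem_chunk hU.le hx
    exact mem_biUnion.2 ⟨y, mem_range.2 hy, hx⟩
  have hsum : ∑ j ∈ range N, #(chunk U c j) = ∑ j ∈ range N, c j :=
    le_antisymm (sum_le_sum fun j _ => card_chunk_le j)
      (hU ▸ (card_le_card hcover).trans card_biUnion_le)
  exact (sum_eq_sum_iff_of_le fun j _ => card_chunk_le j).1 hsum y (mem_range.2 hy)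

lemma biUnion_chunk {I : Finset ℕ} {N : ℕ} (hU : #U ≤ ∑ j ∈ range N, c j)
    (hI : ∀ y, c y ≠ 0 → y ∈ I) : I.biUnion (chunk U c) = U := by
  refine subset_antisymm (biUnion_subset.2 fun y _ => filter_subset _ U) fun x hx => ?_
  obtain ⟨y, -, hxy⟩ := exists_mem_chunk hU hx
  refine mem_biUnion.2 ⟨y, hI y fun hcy => ?_, hxy⟩
  have hempty : chunk U c y = ∅ := card_eq_zero.1 (Nat.le_zero.1 (hcy ▸ card_chunk_le y))
  exact notMem_empty x (hempty ▸ hxy)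

end chunk

theorem biUnion_mem_schreier_one_add {ι : Type*} [Fintype ι] {m : ℕ} {G : ι → Finset ℕ}
    (hne : ∀ i, (G i).Nonempty) (hdisj : Pairwise fun i j => Disjoint (G i) (G j))
    (hS : ∀ i, G i ∈ Schreier 1) (hmin : univ.image (fun i => fmin (G i)) ∈ Schreier m) :
    univ.biUnion G ∈ Schreier (1 + m) := by
  set f := fun i => fmin (G i)
  set U := univ.biUnion G
  set M := univ.image f
  -- `c y` is the size of the member of the family with minimum `y`
  let c : ℕ → ℕ := fun y => ∑ i with f i = y, #(G i)
  set E := chunk U c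
  have hf : Function.Injective f := fmin_injective hne hdisj
  have hc : ∀ i, c (f i) = #(G i) := fun i => by
    have hfib : univ.filter (fun j => f j = f i) = {i} := by ext; simp [hf.eq_iff]
    simp only [c, hfib, sum_singleton]
  have hpartial : ∀ y, ∑ j ∈ range y, c j = ∑ i with f i < y, #(G i) := fun y => by
    simp [c, sum_fiberwise_eq_sum_filter]
  obtain ⟨N, hN⟩ : ∃ N, ∀ i, f i < N :=
    ⟨univ.sup f + 1, fun i => Nat.lt_succ_of_le (le_sup (mem_univ i))⟩
  have hU : #U = ∑ j ∈ range N, c j := by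
    rw [hpartial, card_biUnion fun i _ j _ hij => hdisj hij]
    simp [hN]
  -- the elements of `U` below `y` all lie in members of the family with minimum below `y`
  have hrank : ∀ y, rankIn U y ≤ ∑ j ∈ range y, c j := fun y => by
    rw [hpartial]
    refine (card_le_card fun x hx => ?_).trans card_biUnion_le
    obtain ⟨hxU, hxy⟩ := mem_filter.1 hx
    obtain ⟨i, -, hxi⟩ := mem_biUnion.1 hxU
    exact mem_biUnion.2 ⟨i, mem_filter.2 ⟨mem_univ i, (fmin_le_s1 hxi).trans_lt hxy⟩, hxi⟩
  have hcardE : ∀ i, #(E (f i)) = #(G i) := fun i => (card_chunk hU (hN i)).trans (hc i)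
  have hEne : ∀ y ∈ M, (E y).Nonempty := forall_mem_image.2 fun i _ =>
    card_pos.1 ((hcardE i).symm ▸ card_pos.2 (hne i))
  have hEU : M.biUnion E = U := biUnion_chunk hU.le fun y hy => by
    obtain ⟨i, hi, -⟩ := exists_ne_zero_of_sum_ne_zero hy
    exact (mem_filter.1 hi).2 ▸ mem_image_of_mem f (mem_univ i)
  rw [← hEU]
  refine biUnion_mem_schreier_of_successive hEne ?_
    (fun y _ z _ hyz a ha b hb => lt_of_mem_chunk hyz ha hb)
    (image_mem_schreier hmin (fun y hy => le_of_mem_chunk (hrank y) (fmin_mem_s1 (hEne y hy)))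
      (strictMonoOn_fmin hEne fun y _ z _ hyz a ha b hb => lt_of_mem_chunk hyz ha hb))
  refine forall_mem_image.2 fun i _ => mem_schreier_one.2 fun a ha => ?_
  calc #(E (f i)) = #(G i) := hcardE i
    _ ≤ f i := mem_schreier_one.1 (hS i) _ (fmin_mem_s1 (hne i))
    _ ≤ a := le_of_mem_chunk (hrank (f i)) ha

lemma fmin_image_fmin_eq_fmin_biUnion {κ : Type*} {s : Finset κ} {B : κ → Finset ℕ}
    (hne : ∀ l ∈ s, (B l).Nonempty) :
    fmin (s.image fun l => fmin (B l)) = fmin (s.biUnion B) := by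
  rcases s.eq_empty_or_nonempty with rfl | hs
  · simp
  obtain ⟨l, hl, hlmin⟩ := mem_image.1 (fmin_mem_s1 (hs.image fun l => fmin (B l)))
  obtain ⟨l', hl', hl'min⟩ := mem_biUnion.1 (fmin_mem_s1 (hs.biUnion fun l hl => hne l hl))
  refine le_antisymm ((fmin_le_s1 (mem_image_of_mem _ hl')).trans (fmin_le_s1 hl'min)) ?_
  rw [← hlmin]
  exact fmin_le_s1 (mem_biUnion.2 ⟨l, hl, fmin_mem_s1 (hne l hl)⟩)

lemma disjoint_of_forall_lt {A B : Finset ℕ} (h : ∀ a ∈ A, ∀ b ∈ B, a < b) : Disjoint A B :=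
  disjoint_left.2 fun a ha hb => (h a ha a hb).false

lemma pairwise_disjoint_sigma_of_successive {ι : Type*} {k : ι → ℕ} {G : ι → Finset ℕ}
    {B : (i : ι) → Fin (k i) → Finset ℕ} (hG : ∀ i, G i = univ.biUnion (B i))
    (hdisj : Pairwise fun i j => Disjoint (G i) (G j))
    (hsucc : ∀ i, ∀ l l' : Fin (k i), l < l' → ∀ a ∈ B i l, ∀ b ∈ B i l', a < b) :
    Pairwise fun p q : (Σ i, Fin (k i)) => Disjoint (B p.1 p.2) (B q.1 q.2) := by
  have hBG : ∀ i l, B i l ⊆ G i := fun i l => hG i ▸ subset_biUnion_of_mem _ (mem_univ l)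
  rintro ⟨i, l⟩ ⟨j, l'⟩ hpq
  by_cases hij : i = j
  · subst hij
    rcases (show l ≠ l' from fun h => hpq (h ▸ rfl)).lt_or_gt with h | h
    · exact disjoint_of_forall_lt (hsucc i l l' h)
    · exact (disjoint_of_forall_lt (hsucc i l' l h)).symm
  · exact (hdisj hij).mono (hBG i l) (hBG j l')

theorem biUnion_mem_schreier_add {ι : Type*} [Fintype ι] {n m : ℕ} {G : ι → Finset ℕ}
    (hne : ∀ i, (G i).Nonempty) (hdisj : Pairwise fun i j => Disjoint (G i) (G j))
    (hS : ∀ i, G i ∈ Schreier n) (hmin : univ.image (fun i => fmin (G i)) ∈ Schreier m) :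
    univ.biUnion G ∈ Schreier (n + m) := by
  induction n generalizing ι m with
  | zero =>
    have hG : ∀ i, G i = {fmin (G i)} := fun i => eq_singleton_iff_unique_mem.2
      ⟨fmin_mem_s1 (hne i), fun x hx => card_le_one.1 (hS i) x hx _ (fmin_mem_s1 (hne i))⟩
    rw [zero_add, biUnion_congr rfl fun i _ => hG i, biUnion_singleton]
    exact hmin
  | succ n ih =>
    choose k B hG hB hBne hBsucc hk using hS
    let J i := univ.image fun l => fmin (B i l)
    have hJG : ∀ i, J i ⊆ G i := fun i => hG i ▸ image_subset_iff.2 fun l _ =>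
      mem_biUnion.2 ⟨l, mem_univ l, fmin_mem_s1 (hBne i l)⟩
    have hJ : univ.biUnion J ∈ Schreier (1 + m) := by
      refine biUnion_mem_schreier_one_add (fun i => ?_)
        (fun i j hij => (hdisj hij).mono (hJG i) (hJG j))
        (fun i => mem_schreier_one.2 fun a ha => (card_image_le.trans (by simp)).trans
          (hk i a (hJG i ha))) ?_
      · obtain ⟨x, hx⟩ := hne i
        obtain ⟨l, -, -⟩ := mem_biUnion.1 (hG i ▸ hx)
        exact ⟨_, mem_image_of_mem _ (mem_univ l)⟩
      · convert hmin using 3 with i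
        rw [hG i]
        exact fmin_image_fmin_eq_fmin_biUnion fun l _ => hBne i l
    have hblocks := ih (G := fun p : (Σ i, Fin (k i)) => B p.1 p.2) (m := 1 + m)
      (fun p => hBne p.1 p.2) (pairwise_disjoint_sigma_of_successive hG hdisj hBsucc)
      (fun p => hB p.1 p.2)
      (by convert hJ using 1; ext; simp [J])
    rw [add_assoc n 1 m]
    convert hblocks using 1
    ext
    simp [hG]

/-- If `G_1, …, G_k` are pairwise disjoint nonempty finite subsets of `ℕ`, each belonging
to `S_n`, and the set of their minima belongs to `S_m`, then their union belongs to
`S_{n+m}`. -/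
theorem union_mem_schreier_add (n m k : ℕ) (G : Fin k → Finset ℕ)
    (hne : ∀ i, (G i).Nonempty)
    (hdisj : ∀ i j : Fin k, i ≠ j → Disjoint (G i) (G j))
    (hS : ∀ i, G i ∈ Schreier n)
    (hmin : (Finset.univ.image fun i => fmin (G i)) ∈ Schreier m) :
    Finset.univ.biUnion G ∈ Schreier (n + m) :=
  biUnion_mem_schreier_add hne (fun i j => hdisj i j) hS hmin

end
end
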